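/- arXiv:1307.5333 — 2 statements merged into one kernel-verified Lean document; each statement's English description precedes it below -/
import Mathlib

section
/- With notation and hypotheses as in the context, |𝒟₀| ≤ C·T^{1+ε}·K₁·K₂·∑_{μ≠0} |a(μ)|², where the constant C depends only on ε, η, c and C₀. -/
/- Statement 4: the elementary bound (1.33) for the diagonal term 𝒟₀. -/

noncomputable section
open Complex Real
open scoped Classical

/-- The Gaussian integers. -/
abbrev Gi := GaussianInt

/-- Embedding of the Gaussian integers into `ℂ`. -/
def gc (α : Gi) : ℂ := GaussianInt.toComplex α

/-- `|α|²`, the norm of a Gaussian integer. -/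
def gnorm (α : Gi) : ℝ := ‖gc α‖ ^ 2

/-- The coefficients `C(ξ)` of (1.21). -/
def Cfun (w₁ w₂ : ℝ → ℂ) (a : Gi → ℂ) (ξ : Gi) : ℂ :=
  ∑' p : Gi × Gi × Gi, if p.1 * p.2.1 * p.2.2 = ξ then
    w₁ (gnorm p.1) * w₂ (gnorm p.2.1) * a p.2.2 else 0

/-- The diagonal term `𝒟₀` of (1.22). -/
def D0 (T : ℝ) (w₀ w₁ w₂ : ℝ → ℂ) (a : Gi → ℂ) : ℂ :=
  (Real.pi : ℂ) * (∫ x in Set.Ioi (0 : ℝ), w₀ x) * (T : ℂ) *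
    ∑' ξ : Gi, if ξ ≠ 0 then ((‖Cfun w₁ w₂ a ξ‖ ^ 2 : ℝ) : ℂ) else 0

/-- Boundedness and support hypotheses on a weight function. -/
def WBdd (η K C₀ : ℝ) (w : ℝ → ℂ) : Prop :=
  ∀ x : ℝ, 0 < x →
    (Real.exp (-η) * K ≤ x ∧ x ≤ Real.exp η * K → ‖w x‖ ≤ C₀) ∧
    (¬(Real.exp (-η) * K ≤ x ∧ x ≤ Real.exp η * K) → w x = 0)

/-!
Expand `|C(ξ)|²` by Cauchy–Schwarz over the factorizations `ξ = κ₁κ₂μ` with all three factors in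
the supports of the weights. The number of such factorizations is at most `d(ξ)²`, and the
divisor bound in `ℤ[i]` gives `d(ξ)² ≪ |ξ|^{4ε/3} ≤ (8K₁K₂M₁)^{2ε/3} ≪ T^ε`. Summing over `ξ`
recovers `∑ |w₁(|κ₁|²)|² |w₂(|κ₂|²)|² |a(μ)|²`, which is at most
`C₀⁴ · #{|κ₁|² ≤ 2K₁} · #{|κ₂|² ≤ 2K₂} · ∑ |a(μ)|² ≪ K₁K₂ ∑ |a(μ)|²`, while the `w₀`-integral is
at most `2C₀`.
-/

open Finset

theorem Multiset.card_le_prod_count_add_one {α : Type*} [DecidableEq α] (s : Multiset α)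
    (F : Finset (Multiset α)) (hF : ∀ t ∈ F, t ≤ s) :
    #F ≤ ∏ p ∈ s.toFinset, (s.count p + 1) := by
  calc #F ≤ #(s.toFinset.pi fun p => Finset.range (s.count p + 1)) := by
        refine card_le_card_of_injOn (fun t p _ => t.count p) (fun t ht => ?_) ?_
        · simpa [Nat.lt_succ_iff] using fun p _ => Multiset.count_le_of_le p (hF t ht)
        · intro t ht t' ht' h
          ext p
          by_cases hp : p ∈ s
          · exact congr_fun (congr_fun h p) (Multiset.mem_toFinset.mpr hp)
          · have := Multiset.count_le_of_le p (hF t ht)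
            have := Multiset.count_le_of_le p (hF t' ht')
            simp_all
    _ = ∏ p ∈ s.toFinset, (s.count p + 1) := by simp

theorem UniqueFactorizationMonoid.card_le_card_mul_prod_count_add_one {α : Type*}
    [CommMonoidWithZero α] [StrongNormalizationMonoid α] [UniqueFactorizationMonoid α]
    [DecidableEq α] {ξ : α} (hξ : ξ ≠ 0) (D U : Finset α) (hD : ∀ d ∈ D, d ∣ ξ)
    (hU : ∀ u : αˣ, (u : α) ∈ U) :
    #D ≤ #U * ∏ p ∈ (normalizedFactors ξ).toFinset, ((normalizedFactors ξ).count p + 1) := by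
  have hD0 : ∀ d ∈ D, d ≠ 0 := fun d hd h => hξ (zero_dvd_iff.mp (h ▸ hD d hd))
  calc #D ≤ #(U ×ˢ D.image normalizedFactors) := by
        refine card_le_card_of_injOn (fun d => ((normUnit d : α), normalizedFactors d))
          (fun d hd => mem_product.mpr ⟨hU _, mem_image_of_mem _ hd⟩) ?_
        intro d hd d' hd' h
        obtain ⟨hu, hf⟩ := Prod.mk.inj h
        have hn : normalize d = normalize d' := by
          rw [← prod_normalizedFactors_eq (hD0 d hd), ← prod_normalizedFactors_eq (hD0 d' hd'),
            hf]
        rw [normalize_apply, normalize_apply, Units.val_inj.mp hu] at hn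
        exact (Units.mul_left_inj _).mp hn
    _ ≤ #U * ∏ p ∈ (normalizedFactors ξ).toFinset, ((normalizedFactors ξ).count p + 1) := by
        rw [card_product]
        refine Nat.mul_le_mul_left _ (Multiset.card_le_prod_count_add_one _ _ ?_)
        simp only [mem_image, forall_exists_index, and_imp, forall_apply_eq_imp_iff₂]
        exact fun d hd => (dvd_iff_normalizedFactors_le_normalizedFactors (hD0 d hd) hξ).mp
          (hD d hd)

theorem card_le_sq_of_forall_mul_mul_eq {α : Type*} [CommMonoidWithZero α] [IsCancelMulZero α]
    [DecidableEq α] {ξ : α} (hξ : ξ ≠ 0) {B : ℝ}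
    (hB : ∀ D : Finset α, (∀ d ∈ D, d ∣ ξ) → (#D : ℝ) ≤ B)
    (Q : Finset (α × α × α)) (hQ : ∀ p ∈ Q, p.1 * p.2.1 * p.2.2 = ξ) :
    (#Q : ℝ) ≤ B ^ 2 := by
  have hQ₁ : ∀ d ∈ Q.image Prod.fst, d ∣ ξ := by
    simp only [mem_image, forall_exists_index, and_imp, forall_apply_eq_imp_iff₂]
    exact fun p hp => hQ p hp ▸ dvd_mul_of_dvd_left (dvd_mul_right _ _) _
  have hQ₂ : ∀ d ∈ Q.image fun p => p.2.1, d ∣ ξ := by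
    simp only [mem_image, forall_exists_index, and_imp, forall_apply_eq_imp_iff₂]
    exact fun p hp => hQ p hp ▸ dvd_mul_of_dvd_left (dvd_mul_left _ _) _
  have hinj : #Q ≤ #(Q.image Prod.fst) * #(Q.image fun p => p.2.1) := by
    rw [← card_product]
    refine card_le_card_of_injOn (fun p => (p.1, p.2.1))
      (fun p hp => mem_product.mpr ⟨mem_image_of_mem _ hp, mem_image_of_mem _ hp⟩) ?_
    intro p hp p' hp' h
    obtain ⟨h1, h2⟩ := Prod.mk.inj h
    have hne : p.1 * p.2.1 ≠ 0 := fun h0 => hξ (by rw [← hQ p hp, h0, zero_mul])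
    have h3 : p.2.2 = p'.2.2 := mul_left_cancel₀ hne (by rw [hQ p hp, h1, h2, hQ p' hp'])
    exact Prod.ext h1 (Prod.ext h2 h3)
  calc (#Q : ℝ) ≤ #(Q.image Prod.fst) * #(Q.image fun p => p.2.1) := by exact_mod_cast hinj
    _ ≤ B ^ 2 := by
        rw [sq]
        exact mul_le_mul (hB _ hQ₁) (hB _ hQ₂) (Nat.cast_nonneg _)
          ((Nat.cast_nonneg _).trans (hB ∅ (by simp)))

theorem norm_sum_sq_le_card_mul {ι E : Type*} [SeminormedAddCommGroup E] (s : Finset ι)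
    (f : ι → E) : ‖∑ i ∈ s, f i‖ ^ 2 ≤ #s * ∑ i ∈ s, ‖f i‖ ^ 2 :=
  (pow_le_pow_left₀ (norm_nonneg _) (norm_sum_le s f) 2).trans (sq_sum_le_card_mul_sum_sq ..)

theorem sum_norm_sq_sum_fiberwise_le {ι κ E : Type*} [DecidableEq κ] [SeminormedAddCommGroup E]
    (s : Finset ι) (g : ι → κ) (f : ι → E) {M : ℝ}
    (hM : ∀ y ∈ s.image g, (#{x ∈ s | g x = y} : ℝ) ≤ M) :
    ∑ y ∈ s.image g, ‖∑ x ∈ s with g x = y, f x‖ ^ 2 ≤ M * ∑ x ∈ s, ‖f x‖ ^ 2 := by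
  calc ∑ y ∈ s.image g, ‖∑ x ∈ s with g x = y, f x‖ ^ 2
      ≤ ∑ y ∈ s.image g, M * ∑ x ∈ s with g x = y, ‖f x‖ ^ 2 := by
        refine sum_le_sum fun y hy => (norm_sum_sq_le_card_mul _ _).trans ?_
        exact mul_le_mul_of_nonneg_right (hM y hy) (sum_nonneg fun _ _ => by positivity)
    _ = M * ∑ x ∈ s, ‖f x‖ ^ 2 := by
        rw [← mul_sum, sum_fiberwise_of_maps_to fun x hx => mem_image_of_mem g hx]

theorem Real.natCast_add_one_le_mul_rpow_pow {δ q : ℝ} (hδ : 0 < δ) (hq : 1 < q) (n : ℕ) :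
    (n + 1 : ℝ) ≤ max 1 (δ * log q)⁻¹ * (q ^ n) ^ δ := by
  have hlog : 0 < δ * log q := mul_pos hδ (log_pos hq)
  have hexp : 1 + n * (δ * log q) ≤ (q ^ n) ^ δ := by
    rw [← rpow_natCast, ← rpow_mul (by linarith), rpow_def_of_pos (by linarith)]
    linarith [add_one_le_exp (log q * (n * δ))]
  calc (n + 1 : ℝ) ≤ max 1 (δ * log q)⁻¹ * (1 + n * (δ * log q)) := by
        rcases le_total 1 (δ * log q)⁻¹ with h | h
        · have : (δ * log q)⁻¹ * (n * (δ * log q)) = n := by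
            field_simp [(log_pos hq).ne']
          rw [max_eq_right h, mul_add, this]
          linarith
        · rw [max_eq_left h, one_mul]
          have : 1 ≤ δ * log q := by
            rwa [inv_le_one₀ hlog] at h
          nlinarith [n.cast_nonneg (α := ℝ)]
    _ ≤ max 1 (δ * log q)⁻¹ * (q ^ n) ^ δ :=
        mul_le_mul_of_nonneg_left hexp (le_max_of_le_left zero_le_one)

theorem gnorm_eq_norm (z : Gi) : gnorm z = (z.norm : ℝ) := by
  rw [gnorm, Complex.sq_norm, gc, GaussianInt.intCast_real_norm]

theorem gnorm_eq_re_sq_add_im_sq (z : Gi) : gnorm z = (z.re : ℝ) ^ 2 + (z.im : ℝ) ^ 2 := by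
  rw [gnorm_eq_norm, Zsqrtd.norm_def]
  push_cast
  ring

theorem gnorm_nonneg (z : Gi) : 0 ≤ gnorm z := sq_nonneg _

theorem gnorm_mul (x y : Gi) : gnorm (x * y) = gnorm x * gnorm y := by
  simp [gnorm, gc, mul_pow]

theorem gnorm_pos {z : Gi} (hz : z ≠ 0) : 0 < gnorm z := by
  rw [gnorm_eq_norm]
  exact_mod_cast GaussianInt.norm_pos.mpr hz

theorem gnorm_eq_one_iff {z : Gi} : gnorm z = 1 ↔ IsUnit z := by
  rw [gnorm_eq_norm, ← Zsqrtd.norm_eq_one_iff' (by norm_num)]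
  exact_mod_cast Iff.rfl

theorem Associated.gnorm_eq {x y : Gi} (h : Associated x y) : gnorm x = gnorm y := by
  obtain ⟨u, rfl⟩ := h
  rw [gnorm_mul, gnorm_eq_one_iff.mpr u.isUnit, mul_one]

theorem two_le_gnorm_of_prime {z : Gi} (hz : Prime z) : 2 ≤ gnorm z := by
  have h1 : 0 < z.norm := GaussianInt.norm_pos.mpr hz.ne_zero
  have h2 : z.norm ≠ 1 := fun h =>
    hz.not_isUnit (gnorm_eq_one_iff.mp (by simp [gnorm_eq_norm, h]))
  rw [gnorm_eq_norm]
  exact_mod_cast (by omega : 2 ≤ z.norm)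

def gnormHom : Gi →* ℝ where
  toFun := gnorm
  map_one' := gnorm_eq_one_iff.mpr isUnit_one
  map_mul' := gnorm_mul

def normBall (R : ℝ) : Finset Gi :=
  ((Icc (-⌈√R⌉) ⌈√R⌉ ×ˢ Icc (-⌈√R⌉) ⌈√R⌉).image fun p => (⟨p.1, p.2⟩ : Gi)).filter
    (gnorm · ≤ R)

theorem mem_normBall {R : ℝ} {z : Gi} : z ∈ normBall R ↔ gnorm z ≤ R := by
  refine ⟨fun h => (mem_filter.mp h).2, fun h => mem_filter.mpr ⟨?_, h⟩⟩
  have hcoord : ∀ x : ℤ, (x : ℝ) ^ 2 ≤ R → x ∈ Icc (-⌈√R⌉) ⌈√R⌉ := fun x hx => by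
    have := (Real.abs_le_sqrt hx).trans (Int.le_ceil √R)
    rw [mem_Icc, ← abs_le]
    exact_mod_cast this
  rw [gnorm_eq_re_sq_add_im_sq] at h
  exact mem_image.mpr ⟨(z.re, z.im),
    mem_product.mpr ⟨hcoord _ (by linarith [sq_nonneg (z.im : ℝ)]),
      hcoord _ (by linarith [sq_nonneg (z.re : ℝ)])⟩, rfl⟩

theorem card_normBall_le {R : ℝ} (hR : 1 ≤ R) : (#(normBall R) : ℝ) ≤ 25 * R := by
  have hs : 1 ≤ √R := Real.one_le_sqrt.mpr hR
  have hn : (⌈√R⌉ : ℝ) < √R + 1 := Int.ceil_lt_add_one _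
  have hn0 : 0 ≤ ⌈√R⌉ := Int.ceil_nonneg (Real.sqrt_nonneg R)
  have hbox : (#(Icc (-⌈√R⌉) ⌈√R⌉) : ℝ) = 2 * ⌈√R⌉ + 1 := by
    rw [Int.card_Icc, show ⌈√R⌉ + 1 - -⌈√R⌉ = 2 * ⌈√R⌉ + 1 by ring]
    exact_mod_cast Int.toNat_of_nonneg (by omega)
  calc (#(normBall R) : ℝ) ≤ #(Icc (-⌈√R⌉) ⌈√R⌉ ×ˢ Icc (-⌈√R⌉) ⌈√R⌉) := by
        exact_mod_cast (card_filter_le _ _).trans card_image_le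
    _ = (2 * ⌈√R⌉ + 1) ^ 2 := by rw [card_product, Nat.cast_mul, hbox, sq]
    _ ≤ (5 * √R) ^ 2 := by gcongr; linarith
    _ = 25 * R := by rw [mul_pow, Real.sq_sqrt (by linarith)]; norm_num

noncomputable instance : StrongNormalizationMonoid Gi :=
  UniqueFactorizationMonoid.strongNormalizationMonoid

open UniqueFactorizationMonoid in
theorem gnorm_eq_prod_pow_count {ξ : Gi} (hξ : ξ ≠ 0) :
    gnorm ξ = ∏ p ∈ (normalizedFactors ξ).toFinset, gnorm p ^ (normalizedFactors ξ).count p := by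
  rw [← (prod_normalizedFactors hξ).gnorm_eq, ← prod_multiset_map_count]
  exact map_multiset_prod gnormHom _

/- Each prime power `p^e ∥ ξ` contributes a factor `e + 1 ≤ B_p (|p|^{2e})^δ`, where `B_p = 1`
unless `|p|² < exp δ⁻¹`, which happens for boundedly many `p`. -/
open UniqueFactorizationMonoid in
theorem exists_card_le_mul_gnorm_rpow {δ : ℝ} (hδ : 0 < δ) :
    ∃ A : ℝ, 0 < A ∧ ∀ ξ : Gi, ξ ≠ 0 → ∀ D : Finset Gi, (∀ d ∈ D, d ∣ ξ) →
      (#D : ℝ) ≤ A * gnorm ξ ^ δ := by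
  set B : ℝ := max 1 (δ * Real.log 2)⁻¹
  have hB : 1 ≤ B := le_max_left _ _
  refine ⟨25 * B ^ #(normBall (Real.exp δ⁻¹)), by positivity, fun ξ hξ D hD => ?_⟩
  set s := normalizedFactors ξ
  have hfactor : ∀ p ∈ s.toFinset, (s.count p + 1 : ℝ) ≤
      (if gnorm p < Real.exp δ⁻¹ then B else 1) * (gnorm p ^ s.count p) ^ δ := by
    intro p hp
    have h2 := two_le_gnorm_of_prime (prime_of_normalized_factor p (Multiset.mem_toFinset.mp hp))
    refine (Real.natCast_add_one_le_mul_rpow_pow hδ (by linarith) _).trans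
      (mul_le_mul_of_nonneg_right ?_ (by positivity))
    split_ifs with hsmall
    · exact max_le_max le_rfl <| inv_anti₀ (by positivity) <|
        mul_le_mul_of_nonneg_left (log_le_log two_pos h2) hδ.le
    · have : δ⁻¹ ≤ Real.log (gnorm p) := (le_log_iff_exp_le (by linarith)).mpr (not_lt.mp hsmall)
      refine max_le le_rfl (inv_le_one_of_one_le₀ ?_)
      calc 1 = δ * δ⁻¹ := (mul_inv_cancel₀ hδ.ne').symm
        _ ≤ δ * Real.log (gnorm p) := mul_le_mul_of_nonneg_left this hδ.le
  have hsmall : ∏ p ∈ s.toFinset, (if gnorm p < Real.exp δ⁻¹ then B else 1) ≤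
      B ^ #(normBall (Real.exp δ⁻¹)) := by
    rw [prod_ite, prod_const, prod_const, one_pow, mul_one]
    exact pow_le_pow_right₀ hB
      (card_le_card fun p hp => mem_normBall.mpr (mem_filter.mp hp).2.le)
  have hunits : ∀ u : Giˣ, (u : Gi) ∈ normBall 1 :=
    fun u => mem_normBall.mpr (gnorm_eq_one_iff.mpr u.isUnit).le
  calc (#D : ℝ) ≤ #(normBall 1) * ∏ p ∈ s.toFinset, (s.count p + 1 : ℝ) := by
        exact_mod_cast card_le_card_mul_prod_count_add_one hξ D _ hD hunits
    _ ≤ 25 * ∏ p ∈ s.toFinset, ((if gnorm p < Real.exp δ⁻¹ then B else 1) *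
          (gnorm p ^ s.count p) ^ δ) := by
        refine mul_le_mul (by simpa using card_normBall_le le_rfl)
          (prod_le_prod (fun _ _ => by positivity) hfactor) (by positivity) (by norm_num)
    _ = 25 * (∏ p ∈ s.toFinset, (if gnorm p < Real.exp δ⁻¹ then B else 1)) * gnorm ξ ^ δ := by
        rw [prod_mul_distrib, Real.finsetProd_rpow _ _ fun p _ => pow_nonneg (gnorm_nonneg p) _,
          ← gnorm_eq_prod_pow_count hξ, mul_assoc]
    _ ≤ 25 * B ^ #(normBall (Real.exp δ⁻¹)) * gnorm ξ ^ δ := by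
        have := Real.rpow_nonneg (gnorm_nonneg ξ) δ
        gcongr

namespace WBdd

variable {η K C₀ : ℝ} {w : ℝ → ℂ}

theorem norm_le (hw : WBdd η K C₀ w) (hC₀ : 0 ≤ C₀) {x : ℝ} (hx : 0 < x) : ‖w x‖ ≤ C₀ := by
  by_cases h : Real.exp (-η) * K ≤ x ∧ x ≤ Real.exp η * K
  · exact (hw x hx).1 h
  · rw [(hw x hx).2 h, norm_zero]
    exact hC₀

theorem le_of_ne_zero (hw : WBdd η K C₀ w) {x : ℝ} (hx : 0 < x) (h : w x ≠ 0) :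
    x ≤ Real.exp η * K :=
  (not_imp_comm.mp (hw x hx).2 h).2

theorem norm_setIntegral_Ioi_le (hw : WBdd η K C₀ w) (hK : 0 < K) (hC₀ : 0 ≤ C₀) :
    ‖∫ x in Set.Ioi 0, w x‖ ≤ C₀ * (Real.exp η * K) := by
  have hsub : Set.Icc (Real.exp (-η) * K) (Real.exp η * K) ⊆ Set.Ioi 0 :=
    fun x hx => lt_of_lt_of_le (by positivity) hx.1
  rw [MeasureTheory.setIntegral_eq_of_subset_of_forall_sdiff_eq_zero measurableSet_Ioi hsub
    fun x hx => (hw x hx.1).2 hx.2]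
  refine (MeasureTheory.norm_setIntegral_le_of_norm_le_const measure_Icc_lt_top
    fun x hx => (hw x (hsub hx)).1 hx).trans (mul_le_mul_of_nonneg_left ?_ hC₀)
  rw [Real.volume_real_Icc]
  exact max_le (by linarith [Real.exp_pos (-η), mul_pos (Real.exp_pos (-η)) hK]) (by positivity)

-- `WBdd` says nothing about `w 0`, so the lattice point `κ = 0` has to be left out.
theorem mem_erase_normBall (hw : WBdd η K C₀ w) (hη : Real.exp η ≤ 2) (hK : 0 ≤ K) {κ : Gi}
    (hκ : κ ≠ 0) (h : w (gnorm κ) ≠ 0) : κ ∈ (normBall (2 * K)).erase 0 :=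
  mem_erase.mpr ⟨hκ, mem_normBall.mpr <| (hw.le_of_ne_zero (gnorm_pos hκ) h).trans
    (mul_le_mul_of_nonneg_right hη hK)⟩

theorem sum_sq_norm_le (hw : WBdd η K C₀ w) (hC₀ : 0 ≤ C₀) (hK : 1 ≤ K) :
    ∑ κ ∈ (normBall (2 * K)).erase 0, ‖w (gnorm κ)‖ ^ 2 ≤ 50 * K * C₀ ^ 2 := by
  calc ∑ κ ∈ (normBall (2 * K)).erase 0, ‖w (gnorm κ)‖ ^ 2
      ≤ ∑ _κ ∈ (normBall (2 * K)).erase 0, C₀ ^ 2 :=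
        sum_le_sum fun κ hκ => pow_le_pow_left₀ (norm_nonneg _)
          (hw.norm_le hC₀ (gnorm_pos (ne_of_mem_erase hκ))) 2
    _ ≤ #(normBall (2 * K)) * C₀ ^ 2 := by
        rw [sum_const, nsmul_eq_mul]
        gcongr
        exact erase_subset _ _
    _ ≤ 25 * (2 * K) * C₀ ^ 2 := by gcongr; exact card_normBall_le (by linarith)
    _ = 50 * K * C₀ ^ 2 := by ring

end WBdd

theorem Cfun_eq_sum {w₁ w₂ : ℝ → ℂ} {a : Gi → ℂ} {S₁ S₂ S₃ : Finset Gi}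
    (h₁ : ∀ κ, κ ≠ 0 → w₁ (gnorm κ) ≠ 0 → κ ∈ S₁) (h₂ : ∀ κ, κ ≠ 0 → w₂ (gnorm κ) ≠ 0 → κ ∈ S₂)
    (h₃ : ∀ μ, a μ ≠ 0 → μ ∈ S₃) {ξ : Gi} (hξ : ξ ≠ 0) :
    Cfun w₁ w₂ a ξ = ∑ p ∈ S₁ ×ˢ S₂ ×ˢ S₃ with p.1 * p.2.1 * p.2.2 = ξ,
      w₁ (gnorm p.1) * w₂ (gnorm p.2.1) * a p.2.2 := by
  rw [Cfun, sum_filter]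
  refine tsum_eq_sum' (Function.support_subset_iff.mpr fun p hp => ?_)
  split_ifs at hp with hpξ
  · rw [← hpξ] at hξ
    simp only [ne_eq, mul_eq_zero, not_or] at hp hξ
    exact mem_product.mpr ⟨h₁ _ hξ.1.1 hp.1.1, mem_product.mpr ⟨h₂ _ hξ.1.2 hp.1.2, h₃ _ hp.2⟩⟩
  · exact absurd rfl hp

theorem sum_product_product_mul {α β γ R : Type*} [CommSemiring R] (s : Finset α)
    (t : Finset β) (u : Finset γ) (f : α → R) (g : β → R) (h : γ → R) :
    ∑ p ∈ s ×ˢ t ×ˢ u, f p.1 * g p.2.1 * h p.2.2 =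
      (∑ x ∈ s, f x) * (∑ y ∈ t, g y) * ∑ z ∈ u, h z := by
  simp only [sum_product, ← mul_sum, ← sum_mul]

theorem tsum_norm_sq_Cfun_le_mul {w₁ w₂ : ℝ → ℂ} {a : Gi → ℂ} {S₁ S₂ S₃ : Finset Gi}
    (h₁ : ∀ κ, κ ≠ 0 → w₁ (gnorm κ) ≠ 0 → κ ∈ S₁) (h₂ : ∀ κ, κ ≠ 0 → w₂ (gnorm κ) ≠ 0 → κ ∈ S₂)
    (h₃ : ∀ μ, a μ ≠ 0 → μ ∈ S₃) {M : ℝ}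
    (hM : ∀ ξ ∈ (S₁ ×ˢ S₂ ×ˢ S₃).image (fun p => p.1 * p.2.1 * p.2.2),
      (#{p ∈ S₁ ×ˢ S₂ ×ˢ S₃ | p.1 * p.2.1 * p.2.2 = ξ} : ℝ) ≤ M) :
    ∑' ξ, (if ξ ≠ 0 then ‖Cfun w₁ w₂ a ξ‖ ^ 2 else 0) ≤
      M * ((∑ κ ∈ S₁, ‖w₁ (gnorm κ)‖ ^ 2) * (∑ κ ∈ S₂, ‖w₂ (gnorm κ)‖ ^ 2) *
        ∑ μ ∈ S₃, ‖a μ‖ ^ 2) := by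
  set P := S₁ ×ˢ S₂ ×ˢ S₃
  have hsupp : (Function.support fun ξ => if ξ ≠ 0 then ‖Cfun w₁ w₂ a ξ‖ ^ 2 else 0) ⊆
      P.image fun p => p.1 * p.2.1 * p.2.2 := by
    refine Function.support_subset_iff.mpr fun ξ hξ => ?_
    split_ifs at hξ with hξ0
    · rw [Cfun_eq_sum h₁ h₂ h₃ hξ0] at hξ
      obtain ⟨p, hp, -⟩ := exists_ne_zero_of_sum_ne_zero (by simpa using hξ)
      exact mem_image.mpr ⟨p, (mem_filter.mp hp).1, (mem_filter.mp hp).2⟩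
    · exact absurd rfl hξ
  rw [tsum_eq_sum' hsupp]
  calc ∑ ξ ∈ P.image _, (if ξ ≠ 0 then ‖Cfun w₁ w₂ a ξ‖ ^ 2 else 0)
      ≤ ∑ ξ ∈ P.image (fun p => p.1 * p.2.1 * p.2.2), ‖∑ p ∈ P with p.1 * p.2.1 * p.2.2 = ξ,
          w₁ (gnorm p.1) * w₂ (gnorm p.2.1) * a p.2.2‖ ^ 2 := by
        refine sum_le_sum fun ξ _ => ?_
        split_ifs with hξ0
        · rw [Cfun_eq_sum h₁ h₂ h₃ hξ0]
        · positivity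
    _ ≤ M * ∑ p ∈ P, ‖w₁ (gnorm p.1) * w₂ (gnorm p.2.1) * a p.2.2‖ ^ 2 :=
        sum_norm_sq_sum_fiberwise_le _ _ _ hM
    _ = _ := by
        simp only [norm_mul, mul_pow, P]
        exact congrArg (M * ·) (sum_product_product_mul _ _ _ (fun κ => ‖w₁ (gnorm κ)‖ ^ 2)
          (fun κ => ‖w₂ (gnorm κ)‖ ^ 2) fun μ => ‖a μ‖ ^ 2)

theorem tsum_norm_sq_Cfun_le {η C₀ K₁ K₂ M₁ A δ : ℝ} {w₁ w₂ : ℝ → ℂ} {a : Gi → ℂ}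
    (hη : Real.exp η ≤ 2) (hC₀ : 0 ≤ C₀) (hK₁ : 1 ≤ K₁) (hK₂ : 1 ≤ K₂) (hM₁ : 0 < M₁)
    (hw₁ : WBdd η K₁ C₀ w₁) (hw₂ : WBdd η K₂ C₀ w₂)
    (ha : ∀ μ : Gi, a μ ≠ 0 → Real.exp (-η) * M₁ ≤ gnorm μ ∧ gnorm μ ≤ Real.exp η * M₁)
    (hA₀ : 0 ≤ A) (hδ : 0 ≤ δ)
    (hA : ∀ ξ : Gi, ξ ≠ 0 → ∀ D : Finset Gi, (∀ d ∈ D, d ∣ ξ) → (#D : ℝ) ≤ A * gnorm ξ ^ δ) :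
    ∑' ξ, (if ξ ≠ 0 then ‖Cfun w₁ w₂ a ξ‖ ^ 2 else 0) ≤
      (A * (8 * (K₁ * K₂ * M₁)) ^ δ) ^ 2 * (50 * K₁ * C₀ ^ 2) * (50 * K₂ * C₀ ^ 2) *
        ∑' μ, ‖a μ‖ ^ 2 := by
  have h₃ : ∀ μ, a μ ≠ 0 → μ ∈ (normBall (2 * M₁)).erase 0 := fun μ hμ => by
    obtain ⟨hlo, hhi⟩ := ha μ hμ
    refine mem_erase.mpr ⟨fun h0 => ?_, mem_normBall.mpr (hhi.trans (by nlinarith))⟩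
    have : gnorm μ = 0 := by simp [h0, gnorm, gc]
    nlinarith [Real.exp_pos (-η)]
  set P := (normBall (2 * K₁)).erase 0 ×ˢ (normBall (2 * K₂)).erase 0 ×ˢ
    (normBall (2 * M₁)).erase 0
  have hfiber : ∀ ξ ∈ P.image (fun p => p.1 * p.2.1 * p.2.2),
      (#{p ∈ P | p.1 * p.2.1 * p.2.2 = ξ} : ℝ) ≤ (A * (8 * (K₁ * K₂ * M₁)) ^ δ) ^ 2 := by
    intro ξ hξ
    obtain ⟨p, hp, rfl⟩ := mem_image.mp hξ
    simp only [P, mem_product, mem_erase, mem_normBall] at hp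
    obtain ⟨⟨h10, h1⟩, ⟨h20, h2⟩, ⟨h30, h3⟩⟩ := hp
    have hξ0 : p.1 * p.2.1 * p.2.2 ≠ 0 := mul_ne_zero (mul_ne_zero h10 h20) h30
    have hnorm : gnorm (p.1 * p.2.1 * p.2.2) ≤ 8 * (K₁ * K₂ * M₁) := by
      rw [gnorm_mul, gnorm_mul]
      calc gnorm p.1 * gnorm p.2.1 * gnorm p.2.2 ≤ 2 * K₁ * (2 * K₂) * (2 * M₁) := by
            gcongr <;> exact gnorm_nonneg _
        _ = 8 * (K₁ * K₂ * M₁) := by ring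
    refine card_le_sq_of_forall_mul_mul_eq hξ0 (fun D hD => (hA _ hξ0 D hD).trans ?_) _
      fun q hq => (mem_filter.mp hq).2
    gcongr
    exact gnorm_nonneg _
  refine (tsum_norm_sq_Cfun_le_mul (fun κ h0 h => hw₁.mem_erase_normBall hη (by linarith) h0 h)
    (fun κ h0 h => hw₂.mem_erase_normBall hη (by linarith) h0 h) h₃ hfiber).trans ?_
  rw [tsum_eq_sum' (s := (normBall (2 * M₁)).erase 0) (Function.support_subset_iff.mpr
    fun μ hμ => h₃ μ (by simpa using hμ))]
  have hw₁_sum := hw₁.sum_sq_norm_le hC₀ hK₁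
  have hw₂_sum := hw₂.sum_sq_norm_le hC₀ hK₂
  calc _ ≤ (A * (8 * (K₁ * K₂ * M₁)) ^ δ) ^ 2 * ((50 * K₁ * C₀ ^ 2) * (50 * K₂ * C₀ ^ 2) *
        ∑ μ ∈ (normBall (2 * M₁)).erase 0, ‖a μ‖ ^ 2) := by
        gcongr ?_ * (?_ * ?_ * _)
    _ = _ := by ring

theorem norm_D0 {T : ℝ} (hT : 0 ≤ T) (w₀ w₁ w₂ : ℝ → ℂ) (a : Gi → ℂ) :
    ‖D0 T w₀ w₁ w₂ a‖ = π * ‖∫ x in Set.Ioi 0, w₀ x‖ * T *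
      ∑' ξ, (if ξ ≠ 0 then ‖Cfun w₁ w₂ a ξ‖ ^ 2 else 0) := by
  have hsum : (∑' ξ : Gi, if ξ ≠ 0 then ((‖Cfun w₁ w₂ a ξ‖ ^ 2 : ℝ) : ℂ) else 0) =
      ((∑' ξ, if ξ ≠ 0 then ‖Cfun w₁ w₂ a ξ‖ ^ 2 else 0 : ℝ) : ℂ) := by
    rw [Complex.ofReal_tsum]
    exact tsum_congr fun ξ => by split_ifs <;> simp
  have hnonneg : 0 ≤ ∑' ξ : Gi, (if ξ ≠ 0 then ‖Cfun w₁ w₂ a ξ‖ ^ 2 else 0) :=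
    tsum_nonneg fun ξ => by split_ifs <;> positivity
  rw [D0, hsum, norm_mul, norm_mul, norm_mul, Complex.norm_of_nonneg pi_pos.le,
    Complex.norm_of_nonneg hT, Complex.norm_of_nonneg hnonneg]

theorem rpow_sq_le_of_max_sq_le {ε c T K₁ K₂ M₁ : ℝ} (hε : 0 ≤ ε) (hc : 0 < c) (hK₁ : 0 ≤ K₁)
    (hK₂ : 0 ≤ K₂) (hM₁ : 0 ≤ M₁) (hT : c * max (max (K₁ ^ 2) (K₂ ^ 2)) (M₁ ^ 2) ≤ T) :
    ((8 * (K₁ * K₂ * M₁)) ^ (ε / 3)) ^ 2 ≤ 64 ^ (ε / 3) * (T / c) ^ ε := by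
  have hX : max (max (K₁ ^ 2) (K₂ ^ 2)) (M₁ ^ 2) ≤ T / c := (le_div_iff₀' hc).mpr hT
  have hTc : 0 ≤ T / c := (sq_nonneg M₁).trans ((le_max_right _ _).trans hX)
  have hsq : (8 * (K₁ * K₂ * M₁)) ^ 2 ≤ 64 * (T / c) ^ 3 := by
    calc (8 * (K₁ * K₂ * M₁)) ^ 2 = 64 * (K₁ ^ 2 * K₂ ^ 2 * M₁ ^ 2) := by ring
      _ ≤ 64 * (T / c * (T / c) * (T / c)) := by
          gcongr
          · exact (le_max_left _ _).trans ((le_max_left _ _).trans hX)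
          · exact (le_max_right _ _).trans ((le_max_left _ _).trans hX)
          · exact (le_max_right _ _).trans hX
      _ = 64 * (T / c) ^ 3 := by ring
  calc ((8 * (K₁ * K₂ * M₁)) ^ (ε / 3)) ^ 2 = ((8 * (K₁ * K₂ * M₁)) ^ 2) ^ (ε / 3) :=
        Real.rpow_pow_comm (by positivity) _ _
    _ ≤ (64 * (T / c) ^ 3) ^ (ε / 3) := by gcongr
    _ = 64 ^ (ε / 3) * (T / c) ^ ε := by
        rw [Real.mul_rpow (by norm_num) (by positivity), ← Real.rpow_natCast,
          ← Real.rpow_mul hTc]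
        congr 2
        push_cast
        ring

theorem stmt4_general (ε η c C₀ : ℝ)
    (hε : 0 < ε) (hη' : η ≤ Real.log 2 / 3) (hc : 0 < c) (hC₀ : 0 < C₀) :
    ∃ C : ℝ, 0 < C ∧
      ∀ (K₁ K₂ M₁ T : ℝ) (w₀ w₁ w₂ : ℝ → ℂ) (a : Gi → ℂ),
        1 ≤ K₁ → 1 ≤ K₂ → 1 ≤ M₁ → 0 < T →
        c * max (max (K₁ ^ 2) (K₂ ^ 2)) (M₁ ^ 2) ≤ T →
        WBdd η 1 C₀ w₀ → WBdd η K₁ C₀ w₁ → WBdd η K₂ C₀ w₂ →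
        (∀ μ : Gi, a μ ≠ 0 → Real.exp (-η) * M₁ ≤ gnorm μ ∧ gnorm μ ≤ Real.exp η * M₁) →
        ‖D0 T w₀ w₁ w₂ a‖ ≤
          C * T ^ (1 + ε) * K₁ * K₂ * ∑' μ : Gi, ‖a μ‖ ^ 2 := by
  obtain ⟨A, hA₀, hA⟩ := exists_card_le_mul_gnorm_rpow (δ := ε / 3) (by positivity)
  refine ⟨π * (2 * C₀) * A ^ 2 * 64 ^ (ε / 3) / c ^ ε * (2500 * C₀ ^ 4), by positivity, ?_⟩
  intro K₁ K₂ M₁ T w₀ w₁ w₂ a hK₁ hK₂ hM₁ hT hTc hw₀ hw₁ hw₂ ha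
  have hη : Real.exp η ≤ 2 := by
    rw [← Real.exp_log two_pos]
    exact Real.exp_le_exp.mpr (by linarith [Real.log_pos one_lt_two])
  have hI : ‖∫ x in Set.Ioi 0, w₀ x‖ ≤ 2 * C₀ :=
    (hw₀.norm_setIntegral_Ioi_le one_pos hC₀.le).trans (by nlinarith)
  have hC := tsum_norm_sq_Cfun_le hη hC₀.le hK₁ hK₂ (by linarith) hw₁ hw₂ ha hA₀.le
    (by positivity) hA
  have hY := rpow_sq_le_of_max_sq_le hε.le hc (by linarith) (by linarith) (by linarith) hTc
  have ha₀ : 0 ≤ ∑' μ : Gi, ‖a μ‖ ^ 2 := tsum_nonneg fun _ => by positivity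
  rw [norm_D0 hT.le]
  calc _ ≤ π * (2 * C₀) * T * ((A * (8 * (K₁ * K₂ * M₁)) ^ (ε / 3)) ^ 2 *
          (50 * K₁ * C₀ ^ 2) * (50 * K₂ * C₀ ^ 2) * ∑' μ, ‖a μ‖ ^ 2) := by
        gcongr
    _ ≤ π * (2 * C₀) * T * (A ^ 2 * (64 ^ (ε / 3) * (T / c) ^ ε) *
          (50 * K₁ * C₀ ^ 2) * (50 * K₂ * C₀ ^ 2) * ∑' μ, ‖a μ‖ ^ 2) := by
        rw [mul_pow]
        gcongr
    _ = _ := by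
        rw [Real.rpow_add hT, Real.rpow_one, Real.div_rpow hT.le hc.le]
        field_simp
        ring

theorem stmt4 (ε η c C₀ : ℝ)
    (hε : 0 < ε) (hη : 0 < η) (hη' : η ≤ Real.log 2 / 3) (hc : 0 < c) (hC₀ : 0 < C₀) :
    ∃ C : ℝ, 0 < C ∧
      ∀ (K₁ K₂ M₁ T : ℝ) (w₀ w₁ w₂ : ℝ → ℂ) (a : Gi → ℂ),
        1 ≤ K₁ → 1 ≤ K₂ → 1 ≤ M₁ → 0 < T →
        c * max (max (K₁ ^ 2) (K₂ ^ 2)) (M₁ ^ 2) ≤ T →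
        WBdd η 1 C₀ w₀ → WBdd η K₁ C₀ w₁ → WBdd η K₂ C₀ w₂ →
        (∀ μ : Gi, a μ ≠ 0 → Real.exp (-η) * M₁ ≤ gnorm μ ∧ gnorm μ ≤ Real.exp η * M₁) →
        ‖D0 T w₀ w₁ w₂ a‖ ≤
          C * T ^ (1 + ε) * K₁ * K₂ * ∑' μ : Gi, ‖a μ‖ ^ 2 :=
  stmt4_general ε η c C₀ hε hη' hc hC₀
end
end

section
/- With C₀ = 4π·e^γ (γ Euler's constant): T(d,t) ≥ C₀^{−2} for all d ∈ ℤ and t ∈ ℝ, and there exist absolute constants c₁, c₂ > 0 such that c₁·|2|d| + 1/2 + it|² ≤ T(d,t) ≤ c₂·|2|d| + 1/2 + it|² for all d ∈ ℤ and t ∈ ℝ. -/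
noncomputable section
open Complex Real
open scoped Classical

/-- `z_{d,t} = 2|d| + 1/2 + i t`. -/
def zdt (d : ℤ) (t : ℝ) : ℂ := 2 * (|d| : ℤ) + 1 / 2 + (t : ℂ) * Complex.I

/-- `T(d,t) = exp(2·Re(Γ′(z_{d,t})/Γ(z_{d,t})) − 2 log π)`. -/
def Tdt (d : ℤ) (t : ℝ) : ℝ :=
  Real.exp (2 * (deriv Complex.Gamma (zdt d t) / Complex.Gamma (zdt d t)).re - 2 * Real.log Real.pi)

/-- `X_d(s) = π^{2s−1}·Γ(2|d|+1−s)/Γ(2|d|+s)`. -/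
def Xd (d : ℤ) (s : ℂ) : ℂ :=
  (Real.pi : ℂ) ^ (2 * s - 1) * Complex.Gamma (2 * ((|d| : ℤ) : ℂ) + 1 - s) /
    Complex.Gamma (2 * ((|d| : ℤ) : ℂ) + s)

/-!
Write `ψ = Γ'/Γ` (Mathlib's `Complex.digamma`) and `z = x + iy` with `x ≥ 1/2`.

On `(0, 1]` the series `ψ(x) = -γ + ∑ (1/(n+1) - 1/(n+x))` follows from `ψ(w + 1) = ψ(w) + 1/w`
and the squeeze `ψ(N) ≤ ψ(x + N) ≤ ψ(N + 1)`, i.e. log-convexity of `Γ`; the identity theorem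
extends it to the half-plane `Re z > 0`. Taking real parts,
`Re ψ(z) = ψ(x) + ∑ₙ y² / ((x+n)((x+n)² + y²))`.
The sum is nonnegative, so `Re ψ(z) ≥ ψ(x) ≥ ψ(1/2) = -γ - 2 log 2`, which is `T ≥ C₀⁻²`.
Its terms are the values at `x + n` of a decreasing function with antiderivative
`log a - log (a² + y²) / 2`, so it equals `log (|z| / x)` up to an error in `[0, 1/x]`.
Together with `log x - 1/x ≤ ψ(x) ≤ log x` (log-convexity of `Γ` once more) this gives
`|Re ψ(z) - log |z|| ≤ 1/x ≤ 2`, hence `T ≍ |z|²`.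
-/

open Filter Topology Finset

local notation "γ" => Real.eulerMascheroniConstant

section AntitoneSum

variable {f F : ℝ → ℝ} {x : ℝ}

theorem AntitoneOn.le_sub_le_of_hasDerivAt (hf : AntitoneOn f (Set.Ici x))
    (hF : ∀ y ∈ Set.Ici x, HasDerivAt F (f y) y) {a : ℝ} (ha : x ≤ a) :
    f (a + 1) ≤ F (a + 1) - F a ∧ F (a + 1) - F a ≤ f a := by
  have hmem : ∀ y ∈ Set.Icc a (a + 1), y ∈ Set.Ici x := fun y hy => ha.trans hy.1
  obtain ⟨c, hc, hslope⟩ := exists_hasDerivAt_eq_slope F f (lt_add_one a)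
    (fun y hy => (hF y (hmem y hy)).continuousAt.continuousWithinAt)
    (fun y hy => hF y (hmem y (Set.Ioo_subset_Icc_self hy)))
  rw [add_sub_cancel_left, div_one] at hslope
  rw [← hslope]
  exact ⟨hf (hmem c (Set.Ioo_subset_Icc_self hc)) (hmem _ (Set.right_mem_Icc.2 (by linarith)))
      hc.2.le,
    hf (hmem a (Set.left_mem_Icc.2 (by linarith))) (hmem c (Set.Ioo_subset_Icc_self hc)) hc.1.le⟩

theorem AntitoneOn.sum_range_bounds_of_hasDerivAt (hf : AntitoneOn f (Set.Ici x))
    (hF : ∀ y ∈ Set.Ici x, HasDerivAt F (f y) y) (N : ℕ) :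
    F (x + N) - F x ≤ ∑ n ∈ range N, f (x + n) ∧
      ∑ n ∈ range N, f (x + n) ≤ F (x + N) - F x + (f x - f (x + N)) := by
  have hterm (n : ℕ) : f (x + (n + 1 : ℕ)) ≤ F (x + (n + 1 : ℕ)) - F (x + n) ∧
      F (x + (n + 1 : ℕ)) - F (x + n) ≤ f (x + n) := by
    simpa [add_assoc] using hf.le_sub_le_of_hasDerivAt hF (a := x + n) (by simp)
  have htel (g : ℝ → ℝ) :
      ∑ n ∈ range N, (g (x + (n + 1 : ℕ)) - g (x + n)) = g (x + N) - g x := by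
    simpa using sum_range_sub (fun n : ℕ => g (x + n)) N
  have hF_le := sum_le_sum fun n (_ : n ∈ range N) => (hterm n).2
  have hF_ge := sum_le_sum fun n (_ : n ∈ range N) => (hterm n).1
  rw [htel F] at hF_le hF_ge
  have hf_tel := htel f
  rw [sum_sub_distrib] at hf_tel
  constructor <;> linarith

theorem AntitoneOn.tsum_bounds_of_hasDerivAt (hf : AntitoneOn f (Set.Ici x))
    (hf0 : ∀ y ∈ Set.Ici x, 0 ≤ f y) (hF : ∀ y ∈ Set.Ici x, HasDerivAt F (f y) y) {L : ℝ}
    (hFL : Tendsto F atTop (𝓝 L)) :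
    Summable (fun n : ℕ => f (x + n)) ∧
      L - F x ≤ ∑' n : ℕ, f (x + n) ∧ ∑' n : ℕ, f (x + n) ≤ L - F x + f x := by
  have hFN : Tendsto (fun N : ℕ => F (x + N)) atTop (𝓝 L) :=
    hFL.comp (tendsto_atTop_add_const_left _ x tendsto_natCast_atTop_atTop)
  have hbounds := hf.sum_range_bounds_of_hasDerivAt hF
  have hf0' (n : ℕ) : 0 ≤ f (x + n) := hf0 _ (by simp)
  have hupper (N : ℕ) : ∑ n ∈ range N, f (x + n) ≤ F (x + N) - F x + f x := by
    linarith [(hbounds N).2, hf0' N]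
  obtain ⟨c, hc⟩ := hFN.bddAbove_range
  have hsum : Summable fun n : ℕ => f (x + n) :=
    summable_of_sum_range_le (c := c - F x + f x) hf0' fun N =>
      (hupper N).trans (by linarith [hc ⟨N, rfl⟩])
  have hlim := hsum.hasSum.tendsto_sum_nat
  exact ⟨hsum, le_of_tendsto_of_tendsto' (hFN.sub_const _) hlim fun N => (hbounds N).1,
    le_of_tendsto_of_tendsto' hlim ((hFN.sub_const _).add_const _) hupper⟩

end AntitoneSum

namespace Real

lemma summable_one_div_nat_add_sq {r : ℝ} (hr : 0 < r) :
    Summable fun n : ℕ => 1 / ((n : ℝ) + r) ^ 2 := by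
  refine ((Real.summable_one_div_nat_add_rpow r 2).2 one_lt_two).congr fun n => ?_
  rw [abs_of_pos (by positivity), Real.rpow_two]

lemma differentiableAt_log_comp_Gamma {x : ℝ} (hx : 0 < x) :
    DifferentiableAt ℝ (Real.log ∘ Real.Gamma) x :=
  (Real.differentiableAt_Gamma fun m h => by linarith [h ▸ hx, m.cast_nonneg (α := ℝ)]).log
    (Real.Gamma_pos_of_pos hx).ne'

lemma slope_log_comp_Gamma {x : ℝ} (hx : 0 < x) :
    slope (Real.log ∘ Real.Gamma) x (x + 1) = Real.log x := by
  rw [slope_def_field, add_sub_cancel_left, div_one, Function.comp_apply, Function.comp_apply,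
    Real.Gamma_add_one hx.ne', Real.log_mul hx.ne' (Real.Gamma_pos_of_pos hx).ne',
    add_sub_cancel_right]

lemma exp_two_mul_log {x : ℝ} (hx : 0 < x) : Real.exp (2 * Real.log x) = x ^ 2 := by
  rw [show 2 * Real.log x = Real.log (x ^ 2) by norm_num [Real.log_pow],
    Real.exp_log (by positivity)]

lemma tsum_sq_div_mul_add_sq_bounds {x : ℝ} (hx : 0 < x) (y : ℝ) :
    Real.log √(x ^ 2 + y ^ 2) - Real.log x ≤
        ∑' n : ℕ, y ^ 2 / ((x + n) * ((x + n) ^ 2 + y ^ 2)) ∧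
      ∑' n : ℕ, y ^ 2 / ((x + n) * ((x + n) ^ 2 + y ^ 2)) ≤
        Real.log √(x ^ 2 + y ^ 2) - Real.log x + x⁻¹ := by
  set f : ℝ → ℝ := fun a => y ^ 2 / (a * (a ^ 2 + y ^ 2))
  set F : ℝ → ℝ := fun a => Real.log a - Real.log (a ^ 2 + y ^ 2) / 2
  have hpos : ∀ a ∈ Set.Ici x, 0 < a := fun a ha => hx.trans_le ha
  have hanti : AntitoneOn f (Set.Ici x) := fun a ha b hb hab => by
    have := hpos a ha
    have := hpos b hb
    dsimp only [f]
    gcongr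
  have hf0 : ∀ a ∈ Set.Ici x, 0 ≤ f a := fun a ha => by
    have := hpos a ha
    positivity
  have hF : ∀ a ∈ Set.Ici x, HasDerivAt F (f a) a := fun a ha => by
    have ha' := hpos a ha
    have hq : a ^ 2 + y ^ 2 ≠ 0 := by positivity
    refine ((Real.hasDerivAt_log ha'.ne').sub
      ((((hasDerivAt_pow 2 a).add_const (y ^ 2)).log hq).div_const 2)).congr_deriv ?_
    simp only [f]
    field_simp
    ring
  have hFlim : Tendsto F atTop (𝓝 0) := by
    have hratio : Tendsto (fun a : ℝ => 1 + (y / a) ^ 2) atTop (𝓝 1) := by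
      simpa using ((tendsto_const_nhds.div_atTop tendsto_id).pow 2).const_add (1 : ℝ)
    have hlog := ((Real.continuousAt_log one_ne_zero).tendsto.comp hratio).div_const (-2)
    rw [Real.log_one, zero_div] at hlog
    refine hlog.congr' (eventually_gt_atTop 0 |>.mono fun a ha => ?_)
    simp only [Function.comp_apply, F]
    rw [show 1 + (y / a) ^ 2 = (a ^ 2 + y ^ 2) / a ^ 2 by field_simp,
      Real.log_div (by positivity) (by positivity), Real.log_pow]
    push_cast
    ring
  obtain ⟨-, hlo, hhi⟩ := hanti.tsum_bounds_of_hasDerivAt hf0 hF hFlim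
  have hFx : 0 - F x = Real.log √(x ^ 2 + y ^ 2) - Real.log x := by
    simp only [F, Real.log_sqrt (by positivity : 0 ≤ x ^ 2 + y ^ 2)]
    ring
  have hfx : f x ≤ x⁻¹ := by
    simp only [f]
    rw [div_le_iff₀ (by positivity)]
    field_simp
    nlinarith [sq_nonneg x]
  rw [hFx] at hlo hhi
  exact ⟨hlo, by linarith⟩

end Real

namespace Complex

lemma ne_neg_natCast_of_re_pos {z : ℂ} (hz : 0 < z.re) (m : ℕ) : z ≠ -m := by
  rintro rfl
  simp only [neg_re, natCast_re, Left.neg_pos_iff] at hz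
  exact (Nat.cast_nonneg m).not_gt hz

section RealArgument

variable {x : ℝ}

lemma digamma_ofReal (hx : 0 < x) : digamma x = ↑(deriv (Real.log ∘ Real.Gamma) x) := by
  have hxm : ∀ m : ℕ, (x : ℂ) ≠ -m := ne_neg_natCast_of_re_pos (by simpa using hx)
  have hR : DifferentiableAt ℝ Real.Gamma x :=
    Real.differentiableAt_Gamma fun m h => hxm m (by exact_mod_cast h)
  have hC : HasDerivAt (fun y : ℝ => (Real.Gamma y : ℂ)) (deriv Gamma x) x := by
    simpa only [Gamma_ofReal] using (differentiableAt_Gamma _ hxm).hasDerivAt.comp_ofReal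
  rw [digamma_def, logDeriv_apply, hC.unique hR.hasDerivAt.ofReal_comp, Gamma_ofReal,
    Function.comp_def, deriv.log hR (Real.Gamma_pos_of_pos hx).ne']
  push_cast
  rfl

lemma re_digamma_ofReal (hx : 0 < x) : (digamma x).re = deriv (Real.log ∘ Real.Gamma) x := by
  rw [digamma_ofReal hx, ofReal_re]

lemma monotoneOn_re_digamma_ofReal : MonotoneOn (fun x : ℝ => (digamma x).re) (Set.Ioi 0) := by
  intro a ha b hb hab
  simp only [re_digamma_ofReal (Set.mem_Ioi.1 ha), re_digamma_ofReal (Set.mem_Ioi.1 hb)]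
  exact Real.convexOn_log_Gamma.monotoneOn_deriv
    (fun y hy => differentiableAt_log_comp_Gamma hy) ha hb hab

lemma re_digamma_ofReal_le_log (hx : 0 < x) : (digamma x).re ≤ Real.log x := by
  rw [re_digamma_ofReal hx, ← slope_log_comp_Gamma hx]
  exact Real.convexOn_log_Gamma.deriv_le_slope hx (Set.mem_Ioi.2 (by linarith)) (lt_add_one x)
    (differentiableAt_log_comp_Gamma hx)

lemma log_sub_inv_le_re_digamma_ofReal (hx : 0 < x) : Real.log x - x⁻¹ ≤ (digamma x).re := by
  have hstep : (digamma ↑(x + 1)).re = (digamma x).re + x⁻¹ := by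
    rw [ofReal_add, ofReal_one,
      digamma_apply_add_one _ (ne_neg_natCast_of_re_pos (by simpa using hx)), add_re,
      ← ofReal_inv, ofReal_re]
  have hlog : Real.log x ≤ (digamma ↑(x + 1)).re := by
    rw [re_digamma_ofReal (by linarith), ← slope_log_comp_Gamma hx]
    exact Real.convexOn_log_Gamma.slope_le_deriv hx (Set.mem_Ioi.2 (by linarith)) (lt_add_one x)
      (differentiableAt_log_comp_Gamma (by linarith))
  linarith

lemma re_digamma_one_half : (digamma (1 / 2)).re = -2 * Real.log 2 - γ := by
  rw [digamma_one_half, sub_re, ofReal_re, mul_re, ← ofReal_ofNat, log_ofReal_re]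
  simp

end RealArgument

section Series

variable {z : ℂ}

lemma norm_one_div_add_one_sub_one_div_add_le {r : ℝ} (hr : 0 < r) (hr1 : r ≤ 1)
    (hz : r ≤ z.re) (n : ℕ) :
    ‖1 / ((n : ℂ) + 1) - 1 / (n + z)‖ ≤ ‖z - 1‖ * (1 / ((n : ℝ) + r) ^ 2) := by
  have hn : (0 : ℝ) ≤ n := n.cast_nonneg
  have h1 : (n : ℝ) + r ≤ ‖(n : ℂ) + 1‖ := by
    rw [show (n : ℂ) + 1 = ((n + 1 : ℝ) : ℂ) by push_cast; ring, norm_real,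
      Real.norm_of_nonneg (by positivity)]
    linarith
  have h2 : (n : ℝ) + r ≤ ‖(n : ℂ) + z‖ :=
    le_trans (by simpa using hz) (re_le_norm ((n : ℂ) + z))
  have hne1 : (n : ℂ) + 1 ≠ 0 := norm_pos_iff.1 (by linarith)
  have hne2 : (n : ℂ) + z ≠ 0 := norm_pos_iff.1 (by linarith)
  rw [div_sub_div _ _ hne1 hne2, norm_div, norm_mul, mul_one_div,
    show 1 * ((n : ℂ) + z) - ((n : ℂ) + 1) * 1 = z - 1 by ring, sq]
  gcongr

lemma summable_digammaSeries (hz : 0 < z.re) :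
    Summable fun n : ℕ => 1 / ((n : ℂ) + 1) - 1 / (n + z) :=
  ((summable_one_div_nat_add_sq (lt_min hz one_pos)).mul_left ‖z - 1‖).of_norm_bounded
    (norm_one_div_add_one_sub_one_div_add_le (lt_min hz one_pos) (min_le_right _ _)
      (min_le_left _ _))

lemma analyticOnNhd_tsum_digammaSeries :
    AnalyticOnNhd ℂ (fun z : ℂ => ∑' n : ℕ, (1 / ((n : ℂ) + 1) - 1 / (n + z)))
      {z | 0 < z.re} := by
  intro z₀ hz₀
  set r := min (z₀.re / 2) 1
  have hr : 0 < r := lt_min (half_pos hz₀) one_pos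
  have hball : ∀ w ∈ Metric.ball z₀ r, r ≤ w.re ∧ ‖w - 1‖ ≤ ‖z₀ - 1‖ + 1 := by
    intro w hw
    rw [Metric.mem_ball, dist_eq] at hw
    have hre : |w.re - z₀.re| < r := by simpa using (abs_re_le_norm (w - z₀)).trans_lt hw
    have hr1 : r ≤ 1 := min_le_right _ _
    have hr2 : r ≤ z₀.re / 2 := min_le_left _ _
    constructor
    · linarith [(abs_lt.1 hre).1]
    · calc ‖w - 1‖ = ‖(w - z₀) + (z₀ - 1)‖ := by ring_nf
        _ ≤ ‖w - z₀‖ + ‖z₀ - 1‖ := norm_add_le _ _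
        _ ≤ ‖z₀ - 1‖ + 1 := by linarith
  have hdiff : DifferentiableOn ℂ (fun z : ℂ => ∑' n : ℕ, (1 / ((n : ℂ) + 1) - 1 / (n + z)))
      (Metric.ball z₀ r) := by
    refine differentiableOn_tsum_of_summable_norm
      ((summable_one_div_nat_add_sq hr).mul_left (‖z₀ - 1‖ + 1)) (fun n => ?_)
      Metric.isOpen_ball (fun n w hw => ?_)
    · refine (differentiableOn_const _).sub
        ((differentiableOn_const _).div (by fun_prop) fun w hw h => ?_)
      exact ne_neg_natCast_of_re_pos (hr.trans_le (hball w hw).1) n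
        (eq_neg_of_add_eq_zero_right h)
    · exact (norm_one_div_add_one_sub_one_div_add_le hr (min_le_right _ _) (hball w hw).1
        n).trans (mul_le_mul_of_nonneg_right (hball w hw).2 (by positivity))
  exact hdiff.analyticOnNhd Metric.isOpen_ball z₀ (Metric.mem_ball_self hr)

lemma analyticOnNhd_digamma : AnalyticOnNhd ℂ digamma {z | 0 < z.re} := by
  have hΓ : AnalyticOnNhd ℂ Gamma {z | 0 < z.re} :=
    DifferentiableOn.analyticOnNhd
      (fun z hz =>
        (differentiableAt_Gamma z (ne_neg_natCast_of_re_pos hz)).differentiableWithinAt)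
      (isOpen_lt continuous_const continuous_re)
  exact hΓ.deriv.div hΓ fun z hz => Gamma_ne_zero (ne_neg_natCast_of_re_pos hz)

lemma digamma_add_nat (hz : ∀ m : ℕ, z ≠ -m) (N : ℕ) :
    digamma (z + N) = digamma z + ∑ k ∈ range N, 1 / (z + k) := by
  induction N with
  | zero => simp
  | succ N ih =>
    have hzN : ∀ m : ℕ, z + N ≠ -m := fun m h =>
      hz (m + N) (by push_cast; linear_combination h)
    rw [Nat.cast_succ, ← add_assoc, digamma_apply_add_one _ hzN, ih, sum_range_succ, one_div]
    ring

end Series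

lemma norm_digamma_one_add_nat_sub_digamma_add_nat_le {x : ℝ} (hx0 : 0 < x) (hx1 : x ≤ 1)
    {N : ℕ} (hN : 0 < N) : ‖digamma (1 + N) - digamma (x + N)‖ ≤ (N : ℝ)⁻¹ := by
  have hNpos : (0 : ℝ) < N := by exact_mod_cast hN
  have hreal (y : ℝ) (hy : 0 < y) : digamma y = ((digamma y).re : ℂ) := by
    rw [re_digamma_ofReal hy, digamma_ofReal hy]
  have hstep : (digamma ↑(1 + (N : ℝ))).re = (digamma (N : ℝ)).re + (N : ℝ)⁻¹ := by
    rw [ofReal_add, ofReal_one, add_comm,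
      digamma_apply_add_one _ (ne_neg_natCast_of_re_pos (by simpa using hNpos)),
      add_re, ← ofReal_inv, ofReal_re]
  have hmono := monotoneOn_re_digamma_ofReal
  have hlo : (digamma (N : ℝ)).re ≤ (digamma ↑(x + (N : ℝ))).re :=
    hmono hNpos (Set.mem_Ioi.2 (by positivity)) (by linarith)
  have hhi : (digamma ↑(x + (N : ℝ))).re ≤ (digamma ↑(1 + (N : ℝ))).re :=
    hmono (Set.mem_Ioi.2 (by positivity)) (Set.mem_Ioi.2 (by positivity)) (by linarith)
  rw [show (1 : ℂ) + N = ↑(1 + (N : ℝ)) by push_cast; rfl,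
    show (x : ℂ) + N = ↑(x + (N : ℝ)) by push_cast; rfl,
    hreal _ (by positivity), hreal (x + N) (by positivity), ← ofReal_sub, norm_real,
    Real.norm_of_nonneg (by linarith)]
  linarith

lemma digamma_ofReal_eq_tsum {x : ℝ} (hx0 : 0 < x) (hx1 : x ≤ 1) :
    digamma x = -γ + ∑' n : ℕ, (1 / ((n : ℂ) + 1) - 1 / (n + x)) := by
  have hx : 0 < (x : ℂ).re := by simpa using hx0
  have hpartial (N : ℕ) : -γ + ∑ n ∈ range N, (1 / ((n : ℂ) + 1) - 1 / (n + x))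
      = digamma x + (digamma (1 + N) - digamma (x + N)) := by
    rw [digamma_add_nat (ne_neg_natCast_of_re_pos hx),
      digamma_add_nat (z := 1) (ne_neg_natCast_of_re_pos (by simp)), digamma_one,
      sum_sub_distrib]
    simp only [add_comm (1 : ℂ), add_comm (x : ℂ)]
    ring
  have hgap : Tendsto (fun N : ℕ => digamma (1 + N) - digamma (x + N)) atTop (𝓝 0) :=
    squeeze_zero_norm' (eventually_atTop.2 ⟨1, fun N hN =>
      norm_digamma_one_add_nat_sub_digamma_add_nat_le hx0 hx1 hN⟩)
      tendsto_inv_atTop_nhds_zero_nat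
  have hlim := ((summable_digammaSeries hx).hasSum.tendsto_sum_nat).const_add (-(γ : ℂ))
  simp only [hpartial] at hlim
  simpa using tendsto_nhds_unique (tendsto_const_nhds.add hgap) hlim

theorem digamma_eq_tsum {z : ℂ} (hz : 0 < z.re) :
    digamma z = -γ + ∑' n : ℕ, (1 / ((n : ℂ) + 1) - 1 / (n + z)) := by
  refine analyticOnNhd_digamma.eqOn_of_preconnected_of_frequently_eq
    (analyticOnNhd_const.add analyticOnNhd_tsum_digammaSeries)
    (convex_halfSpace_re_gt 0).isPreconnected (z₀ := 1) (by simp) ?_ hz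
  have hreal : ∀ᶠ x : ℝ in 𝓝[<] 1,
      digamma x = -γ + ∑' n : ℕ, (1 / ((n : ℂ) + 1) - 1 / (n + x)) :=
    Filter.mem_of_superset (Ioo_mem_nhdsLT zero_lt_one) fun x hx =>
      digamma_ofReal_eq_tsum hx.1 hx.2.le
  have hofReal : Tendsto (fun x : ℝ => (x : ℂ)) (𝓝[<] 1) (𝓝[≠] 1) :=
    tendsto_nhdsWithin_iff.2 ⟨(continuous_ofReal.tendsto' 1 1 ofReal_one).mono_left
      nhdsWithin_le_nhds, eventually_nhdsWithin_of_forall fun x hx => by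
        simpa using (Set.mem_Iio.1 hx).ne⟩
  exact hofReal.frequently hreal.frequently

theorem re_digamma_eq_re_digamma_re_add_tsum {z : ℂ} (hz : 0 < z.re) :
    (digamma z).re = (digamma z.re).re +
      ∑' n : ℕ, z.im ^ 2 / ((z.re + n) * ((z.re + n) ^ 2 + z.im ^ 2)) := by
  have hx : 0 < (z.re : ℂ).re := by simpa using hz
  have hsum := (summable_digammaSeries hz).sub (summable_digammaSeries hx)
  have hdiff : digamma z - digamma z.re = ∑' n : ℕ,
      ((1 / ((n : ℂ) + 1) - 1 / (n + z)) - (1 / ((n : ℂ) + 1) - 1 / (n + z.re))) := by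
    rw [digamma_eq_tsum hz, digamma_eq_tsum hx,
      (summable_digammaSeries hz).tsum_sub (summable_digammaSeries hx)]
    ring
  replace hdiff := congrArg re hdiff
  rw [sub_re, re_tsum hsum, sub_eq_iff_eq_add'] at hdiff
  rw [hdiff]
  congr 1
  refine tsum_congr fun n => ?_
  have hpos : 0 < z.re + n := by positivity
  simp only [sub_sub_sub_cancel_left, sub_re, one_div, inv_re, normSq_apply, add_re, add_im,
    natCast_re, natCast_im, ofReal_re, ofReal_im]
  field_simp
  ring

theorem abs_re_digamma_sub_log_norm_le {z : ℂ} (hz : 0 < z.re) :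
    |(digamma z).re - Real.log ‖z‖| ≤ z.re⁻¹ := by
  have hsum := tsum_sq_div_mul_add_sq_bounds hz z.im
  have hlo := log_sub_inv_le_re_digamma_ofReal hz
  have hhi := re_digamma_ofReal_le_log hz
  rw [re_digamma_eq_re_digamma_re_add_tsum hz, norm_eq_sqrt_sq_add_sq, abs_le]
  constructor <;> linarith [hsum.1, hsum.2]

theorem re_digamma_one_half_le_re_digamma {z : ℂ} (hz : 1 / 2 ≤ z.re) :
    (digamma (1 / 2)).re ≤ (digamma z).re := by
  have hz0 : 0 < z.re := by linarith
  have hmono : (digamma ((1 / 2 : ℝ) : ℂ)).re ≤ (digamma z.re).re :=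
    monotoneOn_re_digamma_ofReal (by norm_num) hz0 hz
  have hsum : 0 ≤ ∑' n : ℕ, z.im ^ 2 / ((z.re + n) * ((z.re + n) ^ 2 + z.im ^ 2)) :=
    tsum_nonneg fun n => by positivity
  rw [re_digamma_eq_re_digamma_re_add_tsum hz0]
  push_cast at hmono
  linarith

end Complex

lemma inv_sq_four_mul_pi_mul_exp_eulerMascheroni :
    ((4 * π * Real.exp γ) ^ 2)⁻¹ = Real.exp (2 * (digamma (1 / 2)).re - 2 * Real.log π) := by
  rw [← Real.exp_two_mul_log (by positivity), ← Real.exp_neg, re_digamma_one_half,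
    Real.log_mul (by positivity) (Real.exp_pos _).ne', Real.log_mul (by norm_num) pi_ne_zero,
    Real.log_exp, show (4 : ℝ) = 2 ^ 2 by norm_num, Real.log_pow]
  push_cast
  ring_nf

lemma one_half_le_zdt_re (d : ℤ) (t : ℝ) : 1 / 2 ≤ (zdt d t).re := by
  have : (0 : ℝ) ≤ ((|d| : ℤ) : ℝ) := by exact_mod_cast abs_nonneg d
  simp only [zdt, add_re, mul_re, ofReal_re, I_re, ofReal_im, I_im]
  norm_num

lemma Tdt_eq_exp_re_digamma (d : ℤ) (t : ℝ) :
    Tdt d t = Real.exp (2 * (digamma (zdt d t)).re - 2 * Real.log π) := by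
  rw [Tdt, ← logDeriv_apply, ← digamma_def]

lemma Tdt_eq_exp_mul_norm_sq (d : ℤ) (t : ℝ) :
    Tdt d t = Real.exp (2 * ((digamma (zdt d t)).re - Real.log ‖zdt d t‖)) *
      ‖zdt d t‖ ^ 2 / π ^ 2 := by
  have hz : 0 < ‖zdt d t‖ :=
    (one_half_pos.trans_le (one_half_le_zdt_re d t)).trans_le (re_le_norm _)
  rw [Tdt_eq_exp_re_digamma, ← Real.exp_two_mul_log hz, ← Real.exp_two_mul_log pi_pos,
    ← Real.exp_add, ← Real.exp_sub]
  ring_nf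

theorem stmt8 :
    (∀ (d : ℤ) (t : ℝ),
        ((4 * Real.pi * Real.exp Real.eulerMascheroniConstant) ^ 2)⁻¹ ≤ Tdt d t) ∧
    (∃ c₁ c₂ : ℝ, 0 < c₁ ∧ 0 < c₂ ∧ ∀ (d : ℤ) (t : ℝ),
        c₁ * ‖zdt d t‖ ^ 2 ≤ Tdt d t ∧
        Tdt d t ≤ c₂ * ‖zdt d t‖ ^ 2) := by
  refine ⟨fun d t => ?_, Real.exp (-4) / π ^ 2, Real.exp 4 / π ^ 2, by positivity,
    by positivity, fun d t => ?_⟩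
  · rw [inv_sq_four_mul_pi_mul_exp_eulerMascheroni, Tdt_eq_exp_re_digamma]
    exact Real.exp_le_exp.2
      (by linarith [re_digamma_one_half_le_re_digamma (one_half_le_zdt_re d t)])
  · have hre := one_half_le_zdt_re d t
    have hdev := abs_le.1 <| (abs_re_digamma_sub_log_norm_le (z := zdt d t) (by linarith)).trans
      ((inv_le_comm₀ (by linarith) two_pos).2 (by linarith))
    rw [Tdt_eq_exp_mul_norm_sq, div_mul_eq_mul_div, div_mul_eq_mul_div]
    constructor <;> gcongr <;> linarith [hdev.1, hdev.2]
end
end
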